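/- Let k be a field, A an associative unital k-algebra, and R an invertible element of A⊗A such that R²³R¹³R¹² = R¹²R²³ holds in A⊗A⊗A, where R¹², R²³, R¹³ denote the images of R under the three algebra embeddings A⊗A → A⊗A⊗A given on simple tensors by a⊗b ↦ a⊗b⊗1, a⊗b ↦ 1⊗a⊗b, and a⊗b ↦ a⊗1⊗b respectively. Define Δ : A → A⊗A by Δ(a) := R(1⊗a)R⁻¹. Then Δ is an algebra homomorphism and is coassociative, i.e. (Δ⊗I)∘Δ = (I⊗Δ)∘Δ as maps A → A⊗A⊗A. -/

import Mathlib

open TensorProduct LinearMap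

variable (k A : Type*) [Field k] [Ring A] [Algebra k A]

/-- The algebra embedding `A ⊗ A → A ⊗ A ⊗ A`, `a ⊗ b ↦ a ⊗ b ⊗ 1`. -/
noncomputable def emb12 : A ⊗[k] A →ₐ[k] A ⊗[k] (A ⊗[k] A) :=
  Algebra.TensorProduct.map (AlgHom.id k A) Algebra.TensorProduct.includeLeft

/-- The algebra embedding `A ⊗ A → A ⊗ A ⊗ A`, `a ⊗ b ↦ a ⊗ 1 ⊗ b`. -/
noncomputable def emb13 : A ⊗[k] A →ₐ[k] A ⊗[k] (A ⊗[k] A) :=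
  Algebra.TensorProduct.map (AlgHom.id k A) Algebra.TensorProduct.includeRight

/-- The algebra embedding `A ⊗ A → A ⊗ A ⊗ A`, `a ⊗ b ↦ 1 ⊗ a ⊗ b`. -/
noncomputable def emb23 : A ⊗[k] A →ₐ[k] A ⊗[k] (A ⊗[k] A) :=
  Algebra.TensorProduct.includeRight

/-- The comultiplication `Δ(a) = R (1 ⊗ a) R⁻¹`, as a `k`-linear map. -/
noncomputable def deltaMap (R : (A ⊗[k] A)ˣ) : A →ₗ[k] A ⊗[k] A :=
  LinearMap.mulRight k ((R⁻¹ : (A ⊗[k] A)ˣ) : A ⊗[k] A) ∘ₗ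
    LinearMap.mulLeft k ((R : (A ⊗[k] A)ˣ) : A ⊗[k] A) ∘ₗ
    (Algebra.TensorProduct.includeRight : A →ₐ[k] A ⊗[k] A).toLinearMap

/-!
`Δ` is conjugation by `R` after `a ↦ 1 ⊗ a`, hence an algebra map. Applying `Δ` in one tensor
factor is again a conjugation after an embedding: `(id ⊗ Δ)(z) = R²³ z¹³ (R²³)⁻¹` and
`(Δ ⊗ id)(z) = R¹² z²³ (R¹²)⁻¹`. So the two sides of coassociativity at `a` are the conjugates of
`1 ⊗ 1 ⊗ a` by `R²³R¹³` and by `R¹²R²³ = R²³R¹³R¹²`, which agree because `R¹²` commutes with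
`1 ⊗ 1 ⊗ a`.
-/

section InnerAut

variable (S : Type*) {B C : Type*} [CommSemiring S] [Semiring B] [Algebra S B] [Semiring C]
  [Algebra S C]

noncomputable def innerAut : Bˣ →* (B ≃ₐ[S] B) :=
  (MulSemiringAction.toAlgAut (ConjAct Bˣ) S B).comp ConjAct.toConjAct.toMonoidHom

variable {S}

@[simp]
theorem innerAut_apply (u : Bˣ) (x : B) : innerAut S u x = u * x * ↑u⁻¹ :=
  ConjAct.units_smul_def _ _

theorem innerAut_apply_of_commute {u : Bˣ} {x : B} (h : Commute (u : B) x) :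
    innerAut S u x = x := by
  rw [innerAut_apply, h.eq, mul_assoc, Units.mul_inv, mul_one]

theorem innerAut_mul_apply (u v : Bˣ) (x : B) :
    innerAut S (u * v) x = innerAut S u (innerAut S v x) := by
  rw [map_mul, AlgEquiv.mul_apply]

theorem AlgHom.map_innerAut (f : B →ₐ[S] C) (u : Bˣ) (x : B) :
    f (innerAut S u x) = innerAut S (Units.map (f : B →* C) u) (f x) := by
  simp

end InnerAut

noncomputable def deltaAlgHom (R : (A ⊗[k] A)ˣ) : A →ₐ[k] A ⊗[k] A :=
  (innerAut k R).toAlgHom.comp Algebra.TensorProduct.includeRight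

theorem toLinearMap_deltaAlgHom (R : (A ⊗[k] A)ˣ) :
    (deltaAlgHom k A R).toLinearMap = deltaMap k A R := by
  ext a
  simp [deltaAlgHom, deltaMap, mul_assoc]

theorem commute_emb12_one_tmul_one_tmul (z : A ⊗[k] A) (a : A) :
    Commute (emb12 k A z) ((1 : A) ⊗ₜ[k] ((1 : A) ⊗ₜ[k] a)) := by
  induction z using TensorProduct.induction_on with
  | zero => simp
  | tmul x y =>
    exact (Commute.one_right x).tmul ((Commute.one_right y).tmul (Commute.one_left a))
  | add u v hu hv => simpa using hu.add_left hv

theorem assoc_tmul_eq_emb12_mul (w : A ⊗[k] A) (y : A) :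
    TensorProduct.assoc k A A A (w ⊗ₜ[k] y) = emb12 k A w * ((1 : A) ⊗ₜ[k] ((1 : A) ⊗ₜ[k] y)) := by
  induction w using TensorProduct.induction_on with
  | zero => simp
  | tmul p q => simp [emb12]
  | add u v hu hv => rw [add_tmul, map_add, hu, hv, map_add, add_mul]

variable {k A}

theorem lTensor_deltaMap (R : (A ⊗[k] A)ˣ) :
    (deltaMap k A R).lTensor A =
      ((innerAut k (Units.map (emb23 k A : A ⊗[k] A →* _) R)).toAlgHom.comp
        (emb13 k A)).toLinearMap := by
  ext x y
  simp [← toLinearMap_deltaAlgHom, deltaAlgHom, emb13, emb23, mul_assoc]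

theorem assoc_comp_rTensor_deltaMap (R : (A ⊗[k] A)ˣ) :
    (TensorProduct.assoc k A A A).toLinearMap ∘ₗ (deltaMap k A R).rTensor A =
      ((innerAut k (Units.map (emb12 k A : A ⊗[k] A →* _) R)).toAlgHom.comp
        (emb23 k A)).toLinearMap := by
  ext x y
  set u := Units.map (emb12 k A : A ⊗[k] A →* A ⊗[k] (A ⊗[k] A)) R
  have hY : innerAut k u ((1 : A) ⊗ₜ[k] ((1 : A) ⊗ₜ[k] y)) = (1 : A) ⊗ₜ[k] ((1 : A) ⊗ₜ[k] y) :=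
    innerAut_apply_of_commute (commute_emb12_one_tmul_one_tmul k A R y)
  calc TensorProduct.assoc k A A A (deltaAlgHom k A R x ⊗ₜ[k] y)
      = emb12 k A (deltaAlgHom k A R x) * ((1 : A) ⊗ₜ[k] ((1 : A) ⊗ₜ[k] y)) :=
        assoc_tmul_eq_emb12_mul k A _ y
    _ = innerAut k u (emb12 k A ((1 : A) ⊗ₜ[k] x) * ((1 : A) ⊗ₜ[k] ((1 : A) ⊗ₜ[k] y))) := by
        rw [map_mul, hY]
        exact congrArg (· * _) (AlgHom.map_innerAut _ _ _)
    _ = innerAut k u (emb23 k A (x ⊗ₜ[k] y)) := by simp [emb12, emb23]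

theorem deltaMap_coassoc (R : (A ⊗[k] A)ˣ)
    (hR : emb23 k A ↑R * emb13 k A ↑R * emb12 k A ↑R = emb12 k A ↑R * emb23 k A ↑R) :
    (TensorProduct.assoc k A A A).symm.toLinearMap ∘ₗ (deltaMap k A R).lTensor A ∘ₗ deltaMap k A R
      = (deltaMap k A R).rTensor A ∘ₗ deltaMap k A R := by
  set R₁₂ := Units.map (emb12 k A : A ⊗[k] A →* A ⊗[k] (A ⊗[k] A)) R
  set R₁₃ := Units.map (emb13 k A : A ⊗[k] A →* A ⊗[k] (A ⊗[k] A)) R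
  set R₂₃ := Units.map (emb23 k A : A ⊗[k] A →* A ⊗[k] (A ⊗[k] A)) R
  have hopf : R₂₃ * R₁₃ * R₁₂ = R₁₂ * R₂₃ := Units.ext hR
  ext a
  set X : A ⊗[k] (A ⊗[k] A) := (1 : A) ⊗ₜ[k] ((1 : A) ⊗ₜ[k] a)
  have hX : innerAut k R₁₂ X = X :=
    innerAut_apply_of_commute (commute_emb12_one_tmul_one_tmul k A R a)
  have h13 : emb13 k A ((1 : A) ⊗ₜ[k] a) = X := by simp [emb13, X]
  have h23 : emb23 k A ((1 : A) ⊗ₜ[k] a) = X := rfl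
  rw [comp_apply, comp_apply, LinearEquiv.coe_coe, LinearEquiv.symm_apply_eq]
  change _ = ((TensorProduct.assoc k A A A).toLinearMap ∘ₗ (deltaMap k A R).rTensor A) _
  rw [assoc_comp_rTensor_deltaMap, lTensor_deltaMap, ← toLinearMap_deltaAlgHom]
  calc innerAut k R₂₃ (emb13 k A (innerAut k R ((1 : A) ⊗ₜ[k] a)))
      = innerAut k (R₂₃ * R₁₃) X := by rw [AlgHom.map_innerAut, h13, innerAut_mul_apply]
    _ = innerAut k (R₂₃ * R₁₃ * R₁₂) X := by rw [innerAut_mul_apply _ R₁₂, hX]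
    _ = innerAut k R₁₂ (emb23 k A (innerAut k R ((1 : A) ⊗ₜ[k] a))) := by
        rw [hopf, AlgHom.map_innerAut, h23, innerAut_mul_apply]

/-- if `R` is an invertible element of `A ⊗ A` satisfying the Hopf equation
`R²³R¹³R¹² = R¹²R²³` in `A ⊗ A ⊗ A`, then `Δ(a) := R(1 ⊗ a)R⁻¹` is a (unital,
multiplicative) algebra homomorphism and is coassociative. -/
theorem deltaMap_algHom_and_coassoc (R : (A ⊗[k] A)ˣ)
    (hR : emb23 k A ↑R * emb13 k A ↑R * emb12 k A ↑R = emb12 k A ↑R * emb23 k A ↑R) :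
    (deltaMap k A R 1 = 1) ∧
    (∀ a b : A, deltaMap k A R (a * b) = deltaMap k A R a * deltaMap k A R b) ∧
    ((TensorProduct.assoc k A A A).symm.toLinearMap ∘ₗ
        (deltaMap k A R).lTensor A ∘ₗ deltaMap k A R
      = (deltaMap k A R).rTensor A ∘ₗ deltaMap k A R) := by
  simp only [← toLinearMap_deltaAlgHom, AlgHom.toLinearMap_apply]
  exact ⟨map_one _, map_mul _, deltaMap_coassoc R hR⟩
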